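/- Consider the Evaluator Machine for α U_{[t1,t2]} β with 0 < t1 ≤ t2, whose queue evolves at each time step by: prepending M at index 0; if α is false, setting all cells in [0,t1−1] to ⊥; if β is true, setting all cells in [t1,t2] whose value is M to ⊤; if β is false, setting cell t2 to ⊥ if its value is M; if α∨β is false, setting all cells in [t1,t2−1] whose value is M to ⊥. Then for all i ≥ t2+1: Q^i[t2+1] = ⊤ iff there exists j ∈ [i−1−t2+t1, i−1] with β true at time j and α true at all k ∈ [i−1−t2, j−1]; and Q^i[t2+1] = ⊥ otherwise. -/

import Mathlib

/-- Queue cell values: `⊤`, `⊥`, or `Maybe`. -/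
inductive Cell : Type
  | top : Cell
  | bot : Cell
  | maybe : Cell
deriving DecidableEq

/-- `run step i` is the queue contents after performing the steps of times `0, 1, …, i`
starting from the empty queue. -/
def run (step : ℕ → List Cell → List Cell) : ℕ → List Cell
  | 0 => step 0 []
  | i + 1 => step (i + 1) (run step i)

/-- Set every cell with index in `[a, b]` to `v`. -/
def setRange (a b : ℕ) (v : Cell) (q : List Cell) : List Cell :=
  q.mapIdx fun j c => if a ≤ j ∧ j ≤ b then v else c

/-- Set the cell at index `k` to `v`, but only if its current value is `Maybe`. -/
def setIfMaybe (k : ℕ) (v : Cell) (q : List Cell) : List Cell :=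
  q.mapIdx fun j c => if j = k ∧ c = Cell.maybe then v else c

/-- Set every cell with index in `[a, b]` whose current value is `Maybe` to `v`. -/
def setRangeIfMaybe (a b : ℕ) (v : Cell) (q : List Cell) : List Cell :=
  q.mapIdx fun j c => if (a ≤ j ∧ j ≤ b) ∧ c = Cell.maybe then v else c

/-- One step of the Evaluator Machine for `α U_{[t1,t2]} β` at time `i`: prepend `Maybe`;
if `α` is false, set all cells in `[0, t1−1]` to `⊥`;
if `β` is true, set all `Maybe` cells in `[t1, t2]` to `⊤`;
if `β` is false, set the cell at index `t2` to `⊥` if it is `Maybe`;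
if `α ∨ β` is false, set all `Maybe` cells in `[t1, t2−1]` to `⊥`.
Cells at indices `> t2` are never modified. -/
def untilStep (α β : ℕ → Bool) (t1 t2 : ℕ) (i : ℕ) (q : List Cell) : List Cell :=
  let q0 := Cell.maybe :: q
  let q1 := if α i then q0 else setRange 0 (t1 - 1) Cell.bot q0
  let q2 := if β i then setRangeIfMaybe t1 t2 Cell.top q1 else setIfMaybe t2 Cell.bot q1
  if (α i || β i) then q2 else setRangeIfMaybe t1 (t2 - 1) Cell.bot q2

/-!
The cell at index `n` after the step at time `i` is the one pushed at time `s = i - n`, and it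
carries the verdict of `α U_{[t1,t2]} β` at `s` as far as it can be decided from the times
`s, …, i`: `⊤` once some `j ≥ s + t1` with `β j` and `α` on `[s, j)` has been seen, `Maybe`
while `α` has held throughout and the window `[s + t1, s + t2]` is not exhausted, and `⊥`
otherwise (`untilVerdict α β t1 t2 s e`, with `e` exclusive, so that a freshly pushed cell is
`untilVerdict … s s`). One step of the machine acts on each cell separately and maps the verdict
at `e` to the verdict at `e + 1`. At index `t2 + 1` the window is exhausted, the cell is no longer
`Maybe`, and it is `⊤` exactly when the until formula holds.
-/

-- Transcribes `untilStep` cell by cell (hence the vacuous `0 ≤ n`), so that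
-- `untilStep_eq_mapIdx` holds by `rfl` after fusing the `mapIdx`s.
def untilCellStep (a b : Bool) (t1 t2 n : ℕ) (c : Cell) : Cell :=
  let c1 := if a then c else if 0 ≤ n ∧ n ≤ t1 - 1 then Cell.bot else c
  let c2 := if b then (if (t1 ≤ n ∧ n ≤ t2) ∧ c1 = Cell.maybe then Cell.top else c1)
    else (if n = t2 ∧ c1 = Cell.maybe then Cell.bot else c1)
  if a || b then c2 else if (t1 ≤ n ∧ n ≤ t2 - 1) ∧ c2 = Cell.maybe then Cell.bot else c2

theorem untilStep_eq_mapIdx (α β : ℕ → Bool) (t1 t2 i : ℕ) (q : List Cell) :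
    untilStep α β t1 t2 i q = (Cell.maybe :: q).mapIdx (untilCellStep (α i) (β i) t1 t2) := by
  unfold untilStep setRange setIfMaybe setRangeIfMaybe
  cases α i <;> cases β i <;> simp only [Bool.or_false, Bool.or_true, if_true, if_false,
    Bool.false_eq_true, List.mapIdx_mapIdx] <;> rfl

theorem untilCellStep_bot (a b : Bool) (t1 t2 n : ℕ) :
    untilCellStep a b t1 t2 n Cell.bot = Cell.bot := by
  cases a <;> cases b <;> simp [untilCellStep]

theorem untilCellStep_top (a b : Bool) {t1 t2 n : ℕ} (ht1 : 0 < t1) (hn : t1 ≤ n) :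
    untilCellStep a b t1 t2 n Cell.top = Cell.top := by
  have : ¬ n ≤ t1 - 1 := by omega
  cases a <;> cases b <;> simp [untilCellStep, this]

theorem untilCellStep_of_ne_maybe (a b : Bool) {t1 t2 n : ℕ} {c : Cell} (ht1 : 0 < t1)
    (hn : t1 ≤ n) (hc : c ≠ Cell.maybe) : untilCellStep a b t1 t2 n c = c := by
  cases c
  exacts [untilCellStep_top a b ht1 hn, untilCellStep_bot a b t1 t2 n, absurd rfl hc]

theorem untilCellStep_maybe (a b : Bool) {t1 t2 n : ℕ} (ht1 : 0 < t1) (h12 : t1 ≤ t2)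
    (hn : n ≤ t2) :
    untilCellStep a b t1 t2 n Cell.maybe =
      if b ∧ t1 ≤ n then Cell.top else if a ∧ n < t2 then Cell.maybe else Cell.bot := by
  cases a <;> cases b <;> simp only [untilCellStep] <;> split_ifs <;> simp_all <;> omega

def HoldsOn (α : ℕ → Bool) (s e : ℕ) : Prop :=
  ∀ k, s ≤ k → k < e → α k = true

def UntilWitnessBefore (α β : ℕ → Bool) (t1 s e : ℕ) : Prop :=
  ∃ j, s + t1 ≤ j ∧ j < e ∧ β j = true ∧ HoldsOn α s j

theorem holdsOn_succ {α : ℕ → Bool} {s e : ℕ} (hse : s ≤ e) :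
    HoldsOn α s (e + 1) ↔ HoldsOn α s e ∧ α e = true := by
  refine ⟨fun h => ⟨fun k hk hke => h k hk (by omega), h e hse (by omega)⟩, ?_⟩
  rintro ⟨h, he⟩ k hk hke
  rcases Nat.lt_succ_iff_lt_or_eq.1 hke with hke | rfl
  exacts [h k hk hke, he]

theorem untilWitnessBefore_succ {α β : ℕ → Bool} {t1 s e : ℕ} :
    UntilWitnessBefore α β t1 s (e + 1) ↔
      UntilWitnessBefore α β t1 s e ∨ (β e = true ∧ s + t1 ≤ e ∧ HoldsOn α s e) := by
  constructor
  · rintro ⟨j, hsj, hje, hβ, hα⟩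
    rcases Nat.lt_succ_iff_lt_or_eq.1 hje with hje | rfl
    exacts [Or.inl ⟨j, hsj, hje, hβ, hα⟩, Or.inr ⟨hβ, hsj, hα⟩]
  · rintro (⟨j, hsj, hje, hβ, hα⟩ | ⟨hβ, hse, hα⟩)
    exacts [⟨j, hsj, hje.trans e.lt_succ_self, hβ, hα⟩, ⟨e, hse, e.lt_succ_self, hβ, hα⟩]

open Classical in
noncomputable def untilVerdict (α β : ℕ → Bool) (t1 t2 s e : ℕ) : Cell :=
  if UntilWitnessBefore α β t1 s e then Cell.top
  else if HoldsOn α s e ∧ e ≤ s + t2 then Cell.maybe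
  else Cell.bot

theorem untilVerdict_self (α β : ℕ → Bool) (t1 t2 s : ℕ) :
    untilVerdict α β t1 t2 s s = Cell.maybe := by
  have hW : ¬ UntilWitnessBefore α β t1 s s := fun ⟨j, hsj, hjs, _⟩ => by omega
  have hH : HoldsOn α s s := fun k hk hks => absurd hk (by omega)
  rw [untilVerdict, if_neg hW, if_pos ⟨hH, by omega⟩]

theorem untilVerdict_eq_top_iff {α β : ℕ → Bool} {t1 t2 s e : ℕ} :
    untilVerdict α β t1 t2 s e = Cell.top ↔ UntilWitnessBefore α β t1 s e := by
  unfold untilVerdict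
  split_ifs <;> simp_all

theorem untilVerdict_eq_bot {α β : ℕ → Bool} {t1 t2 s e : ℕ} (he : s + t2 < e)
    (hW : ¬ UntilWitnessBefore α β t1 s e) : untilVerdict α β t1 t2 s e = Cell.bot := by
  rw [untilVerdict, if_neg hW, if_neg ((by omega : ¬ e ≤ s + t2) ∘ And.right)]

theorem untilVerdict_ne_maybe {α β : ℕ → Bool} {t1 t2 s e : ℕ} (he : s + t2 < e) :
    untilVerdict α β t1 t2 s e ≠ Cell.maybe := by
  by_cases hW : UntilWitnessBefore α β t1 s e
  · simp [untilVerdict, hW]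
  · simp [untilVerdict_eq_bot he hW]

theorem untilCellStep_untilVerdict (α β : ℕ → Bool) {t1 t2 s e : ℕ} (ht1 : 0 < t1)
    (h12 : t1 ≤ t2) (hse : s ≤ e) (hes : e ≤ s + t2) :
    untilCellStep (α e) (β e) t1 t2 (e - s) (untilVerdict α β t1 t2 s e) =
      untilVerdict α β t1 t2 s (e + 1) := by
  by_cases hW : UntilWitnessBefore α β t1 s e
  · have hte : s + t1 < e := by obtain ⟨j, hsj, hje, -⟩ := hW; omega
    rw [untilVerdict, if_pos hW, untilVerdict, if_pos (untilWitnessBefore_succ.2 (.inl hW)),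
      untilCellStep_top _ _ ht1 (by omega)]
  by_cases hH : HoldsOn α s e
  · rw [untilVerdict, if_neg hW, if_pos ⟨hH, hes⟩, untilCellStep_maybe _ _ ht1 h12 (by omega),
      untilVerdict, untilWitnessBefore_succ, holdsOn_succ hse]
    have hlo : s + t1 ≤ e ↔ t1 ≤ e - s := by omega
    have hhi : e + 1 ≤ s + t2 ↔ e - s < t2 := by omega
    simp only [hW, hH, hlo, hhi, false_or, true_and, and_true]
  · have hW' : ¬ UntilWitnessBefore α β t1 s (e + 1) := by
      rw [untilWitnessBefore_succ]; tauto
    have hH' : ¬ HoldsOn α s (e + 1) := by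
      rw [holdsOn_succ hse]; tauto
    rw [untilVerdict, if_neg hW, if_neg (hH ∘ And.left), untilCellStep_bot, untilVerdict,
      if_neg hW', if_neg (hH' ∘ And.left)]

theorem untilStep_getElem?_of_prepend {α β : ℕ → Bool} {t1 t2 i n : ℕ} {q : List Cell}
    (ht1 : 0 < t1) (h12 : t1 ≤ t2) (hni : n ≤ i) (hn : n ≤ t2)
    (hq : (Cell.maybe :: q)[n]? = some (untilVerdict α β t1 t2 (i - n) i)) :
    (untilStep α β t1 t2 i q)[n]? = some (untilVerdict α β t1 t2 (i - n) (i + 1)) := by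
  have key := untilCellStep_untilVerdict α β ht1 h12 (Nat.sub_le i n) (by omega : i ≤ i - n + t2)
  rw [Nat.sub_sub_self hni] at key
  rw [untilStep_eq_mapIdx, List.getElem?_mapIdx, hq, Option.map_some, key]

theorem run_untilStep_getElem? (α β : ℕ → Bool) {t1 t2 : ℕ} (ht1 : 0 < t1) (h12 : t1 ≤ t2) :
    ∀ i n, n ≤ i → n ≤ t2 →
      (run (untilStep α β t1 t2) i)[n]? = some (untilVerdict α β t1 t2 (i - n) (i + 1))
  | 0, n, hni, hn => by
    obtain rfl : n = 0 := Nat.le_zero.1 hni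
    exact untilStep_getElem?_of_prepend ht1 h12 le_rfl hn (by simp [untilVerdict_self])
  | i + 1, n, hni, hn => by
    refine untilStep_getElem?_of_prepend ht1 h12 hni hn ?_
    cases n with
    | zero => simp [untilVerdict_self]
    | succ k =>
      rw [List.getElem?_cons_succ, run_untilStep_getElem? α β ht1 h12 i k (by omega) (by omega),
        Nat.add_sub_add_right]

/-- Correctness of the Until Evaluator Machine (with `0 < t1 ≤ t2`): for all
`i ≥ t2 + 1`, the cell at index `t2 + 1` equals `⊤` iff there exists
`j ∈ [i − 1 − t2 + t1, i − 1]` with `β` true at `j` and `α` true at all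
`k ∈ [i − 1 − t2, j)` (i.e. `x^{i−t2−1} ⊨ α U_{[t1,t2]} β`), and equals `⊥` otherwise. -/
theorem until_EM_correct (α β : ℕ → Bool) (t1 t2 : ℕ) (ht1 : 0 < t1) (h12 : t1 ≤ t2)
    (i : ℕ) (hi : t2 + 1 ≤ i) :
    ((run (untilStep α β t1 t2) i)[t2 + 1]? = some Cell.top ↔
      ∃ j, i - 1 - t2 + t1 ≤ j ∧ j ≤ i - 1 ∧ β j = true ∧
        ∀ k, i - 1 - t2 ≤ k → k < j → α k = true) ∧
    (¬ (∃ j, i - 1 - t2 + t1 ≤ j ∧ j ≤ i - 1 ∧ β j = true ∧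
        ∀ k, i - 1 - t2 ≤ k → k < j → α k = true) →
      (run (untilStep α β t1 t2) i)[t2 + 1]? = some Cell.bot) := by
  obtain ⟨m, rfl⟩ : ∃ m, i = m + 1 := ⟨i - 1, by omega⟩
  have hdone : m - t2 + t2 < m + 1 := by omega
  have hcell : (run (untilStep α β t1 t2) (m + 1))[t2 + 1]? =
      some (untilVerdict α β t1 t2 (m - t2) (m + 1)) := by
    rw [run, untilStep_eq_mapIdx, List.getElem?_mapIdx, List.getElem?_cons_succ,
      run_untilStep_getElem? α β ht1 h12 m t2 (by omega) le_rfl, Option.map_some,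
      untilCellStep_of_ne_maybe _ _ ht1 (by omega) (untilVerdict_ne_maybe hdone)]
  have hsem : UntilWitnessBefore α β t1 (m - t2) (m + 1) ↔
      ∃ j, m - t2 + t1 ≤ j ∧ j ≤ m ∧ β j = true ∧ ∀ k, m - t2 ≤ k → k < j → α k = true := by
    simp only [UntilWitnessBefore, HoldsOn, Nat.lt_succ_iff]
  rw [Nat.add_sub_cancel, hcell, ← hsem, Option.some_inj, untilVerdict_eq_top_iff]
  exact ⟨Iff.rfl, fun hW => congrArg some (untilVerdict_eq_bot hdone hW)⟩
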